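/- Let K ≥ 2 and let α : Fin K → Fin K → ℝ be nonnegative channel strengths satisfying the TIN-optimality condition: for every i, α i i ≥ (max over j ≠ i of α j i) + (max over k ≠ i of α i k). Let D_u(α) ⊆ ℝ^K be the set defined by the same singleton-cycle and cycle constraints as the TIN region D(α) but without the nonnegativity constraints d k ≥ 0. Then the nonnegativity constraints are redundant for the sum: sup_{d ∈ D(α)} ∑_k d k = sup_{d ∈ D_u(α)} ∑_k d k. -/

import Mathlib

open scoped BigOperators

/-- The maximum of `g j` over all `j ≠ i`, expressed as a supremum over the
(finite, and for `K ≥ 2` nonempty) subtype `{j // j ≠ i}`. -/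
noncomputable def maxNe {K : ℕ} (g : Fin K → ℝ) (i : Fin K) : ℝ :=
  ⨆ j : {j : Fin K // j ≠ i}, g j.1

/-- The TIN region for channel strengths `α`: nonnegative tuples satisfying
all singleton-cycle and cycle constraints. -/
def tinRegion {K : ℕ} (α : Fin K → Fin K → ℝ) : Set (Fin K → ℝ) :=
  {d | (∀ k, 0 ≤ d k) ∧ (∀ k, d k ≤ α k k) ∧
    ∀ σ : Equiv.Perm (Fin K), σ.IsCycle →
      ∑ k ∈ σ.support, d k ≤ ∑ k ∈ σ.support, (α k k - α (σ k) k)}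

/-- The TIN constraint region without the nonnegativity constraints: all real
tuples satisfying the singleton-cycle and cycle constraints. -/
def tinRegionU {K : ℕ} (α : Fin K → Fin K → ℝ) : Set (Fin K → ℝ) :=
  {d | (∀ k, d k ≤ α k k) ∧
    ∀ σ : Equiv.Perm (Fin K), σ.IsCycle →
      ∑ k ∈ σ.support, d k ≤ ∑ k ∈ σ.support, (α k k - α (σ k) k)}

private lemma le_maxNe {K : ℕ} (g : Fin K → ℝ) {i q : Fin K} (hq : q ≠ i) :
    g q ≤ maxNe g i := by
  unfold maxNe
  exact le_ciSup (f := fun j : {j : Fin K // j ≠ i} => g j.1)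
    (Set.Finite.bddAbove (Set.finite_range _)) ⟨q, hq⟩

private lemma maxNe_nonneg {K : ℕ} (hK : 2 ≤ K) {g : Fin K → ℝ} (hg : ∀ j, 0 ≤ g j)
    (i : Fin K) : 0 ≤ maxNe g i := by
  obtain ⟨q, hq⟩ := Fintype.exists_ne_of_one_lt_card (by rw [Fintype.card_fin]; omega) i
  exact le_trans (hg q) (le_maxNe g hq)

private lemma cycle_clip {K : ℕ} (hK : 2 ≤ K) (α : Fin K → Fin K → ℝ)
    (hpos : ∀ i j, 0 ≤ α i j)
    (htin : ∀ i, maxNe (fun j => α j i) i + maxNe (fun k => α i k) i ≤ α i i)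
    (d : Fin K → ℝ) (hd : d ∈ tinRegionU α) :
    ∀ n (σ : Equiv.Perm (Fin K)), σ.IsCycle → σ.support.card ≤ n →
      ∑ k ∈ σ.support, max (d k) 0 ≤ ∑ k ∈ σ.support, (α k k - α (σ k) k) := by
  obtain ⟨hd1, hd2⟩ := hd
  intro n
  induction n with
  | zero =>
    intro σ hσ hcard
    have := hσ.two_le_card_support
    omega
  | succ n ih =>
    intro σ hσ hcard
    by_cases hneg : ∃ j ∈ σ.support, d j < 0
    · obtain ⟨j, hjS, hdj⟩ := hneg
      have hσj : σ j ≠ j := Equiv.Perm.mem_support.mp hjS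
      have hmaxj : max (d j) 0 = 0 := max_eq_right hdj.le
      by_cases h2 : σ (σ j) = j
      · -- the cycle is a transposition
        have hjq : j ≠ σ j := Ne.symm hσj
        have hsupp : σ.support = {j, σ j} := by
          have hswap := hσ.eq_swap_of_apply_apply_eq_self hσj h2
          rw [Eq.symm (Equiv.Perm.support_swap hjq)]
          exact congrArg Equiv.Perm.support hswap
        rw [hsupp, Finset.sum_pair hjq, Finset.sum_pair hjq, h2, hmaxj]
        have hb1 : α (σ j) j ≤ maxNe (fun k => α k j) j := le_maxNe (fun k => α k j) hσj
        have hb2 : α j (σ j) ≤ maxNe (fun k => α j k) j := le_maxNe (fun k => α j k) hσj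
        have htj := htin j
        have hdq := hd1 (σ j)
        have hq0 := hpos (σ j) (σ j)
        have := max_le (a := d (σ j)) (b := (0:ℝ))
          (c := α j j - α (σ j) j + (α (σ j) (σ j) - α j (σ j)))
          (by linarith) (by linarith)
        linarith
      · -- shortcut the cycle past j
        set σ' : Equiv.Perm (Fin K) := Equiv.swap j (σ j) * σ with hσ'def
        have hσ' : σ'.IsCycle := hσ.swap_mul hσj h2
        set p : Fin K := σ⁻¹ j with hpdef
        have hσp : σ p = j := σ.apply_symm_apply j
        have hpj : p ≠ j := by
          intro h
          rw [h] at hσp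
          exact hσj hσp
        have hσ'p : σ' p = σ j := by
          simp [hσ'def, hσp]
        have hσ'other : ∀ k, k ≠ j → k ≠ p → σ' k = σ k := by
          intro k hkj hkp
          have h1 : σ k ≠ j := fun h => hkp (by rw [hpdef, ← h, Equiv.Perm.inv_def, Equiv.symm_apply_apply])
          have h3 : σ k ≠ σ j := fun h => hkj (σ.injective h)
          simp [hσ'def, Equiv.swap_apply_of_ne_of_ne h1 h3]
        have hsupp' : σ'.support = σ.support.erase j := by
          ext k
          simp only [Equiv.Perm.mem_support, Finset.mem_erase]
          by_cases hkj : k = j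
          · subst hkj
            simp [hσ'def, Equiv.swap_apply_right]
          · by_cases hkp : k = p
            · subst hkp
              have hne : σ j ≠ p := by
                intro h
                exact h2 (by rw [h, hσp])
              simp only [hσ'p]
              constructor
              · intro _
                exact ⟨hpj, by rw [hσp]; exact Ne.symm hpj⟩
              · intro _
                exact hne
            · rw [hσ'other k hkj hkp]
              tauto
        have hcard' : σ'.support.card ≤ n := by
          rw [hsupp', Finset.card_erase_of_mem hjS]
          omega
        have hIH := ih σ' hσ' hcard'
        have hpS : p ∈ σ.support.erase j := by
          refine Finset.mem_erase.mpr ⟨hpj, ?_⟩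
          rw [Equiv.Perm.mem_support, hσp]
          exact Ne.symm hpj
        -- LHS: drop the j term (which is 0)
        have hL : ∑ k ∈ σ.support, max (d k) 0 = ∑ k ∈ σ.support.erase j, max (d k) 0 := by
          rw [← Finset.add_sum_erase _ _ hjS, hmaxj, zero_add]
        -- compare the two constraint sums
        have hR : ∑ k ∈ σ.support.erase j, (α k k - α (σ' k) k)
            ≤ ∑ k ∈ σ.support, (α k k - α (σ k) k) := by
          rw [← Finset.add_sum_erase _ (fun k => α k k - α (σ k) k) hjS,
            ← Finset.add_sum_erase _ (fun k => α k k - α (σ k) k) hpS,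
            ← Finset.add_sum_erase _ (fun k => α k k - α (σ' k) k) hpS]
          have hrest : ∑ k ∈ (σ.support.erase j).erase p, (α k k - α (σ' k) k)
              = ∑ k ∈ (σ.support.erase j).erase p, (α k k - α (σ k) k) := by
            refine Finset.sum_congr rfl fun k hk => ?_
            have h' := Finset.mem_erase.mp hk
            have h'' := Finset.mem_erase.mp h'.2
            rw [hσ'other k h''.1 h'.1]
          rw [hrest, hσ'p, hσp]
          have hb1 : α (σ j) j ≤ maxNe (fun k => α k j) j := le_maxNe (fun k => α k j) hσj
          have hb2 : α j p ≤ maxNe (fun k => α j k) j := le_maxNe (fun k => α j k) hpj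
          have htj := htin j
          have h0 := hpos (σ j) p
          linarith
        calc ∑ k ∈ σ.support, max (d k) 0
            = ∑ k ∈ σ.support.erase j, max (d k) 0 := hL
          _ ≤ ∑ k ∈ σ.support.erase j, (α k k - α (σ' k) k) := by rw [← hsupp']; exact hIH
          _ ≤ ∑ k ∈ σ.support, (α k k - α (σ k) k) := hR
    · push_neg at hneg
      have : ∑ k ∈ σ.support, max (d k) 0 = ∑ k ∈ σ.support, d k :=
        Finset.sum_congr rfl fun k hk => max_eq_left (hneg k hk)
      rw [this]
      exact hd2 σ hσ

/-- Under the TIN-optimality condition, the nonnegativity constraints are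
redundant for the sum: the supremum of the coordinate sum over the TIN region
equals the supremum over the region defined without nonnegativity. -/
theorem nonnegativity_redundant_for_sum
    (K : ℕ) (hK : 2 ≤ K) (α : Fin K → Fin K → ℝ)
    (hpos : ∀ i j, 0 ≤ α i j)
    (htin : ∀ i, maxNe (fun j => α j i) i + maxNe (fun k => α i k) i ≤ α i i) :
    sSup ((fun d => ∑ k, d k) '' tinRegion α)
      = sSup ((fun d => ∑ k, d k) '' tinRegionU α) := by
  have hsub : tinRegion α ⊆ tinRegionU α := fun d hd => ⟨hd.2.1, hd.2.2⟩
  have h0 : (0 : Fin K → ℝ) ∈ tinRegion α := by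
    refine ⟨fun k => le_refl 0, fun k => hpos k k, fun σ hσ => ?_⟩
    simp only [Pi.zero_apply, Finset.sum_const_zero]
    refine Finset.sum_nonneg fun k hk => ?_
    have hk' : σ k ≠ k := Equiv.Perm.mem_support.mp hk
    have h1 : α (σ k) k ≤ maxNe (fun j => α j k) k := le_maxNe (fun j => α j k) hk'
    have h2 : (0:ℝ) ≤ maxNe (fun j => α k j) k := maxNe_nonneg hK (fun j => hpos k j) k
    have h3 := htin k
    linarith
  have hAne : ((fun d => ∑ k, d k) '' tinRegion α).Nonempty :=
    ⟨_, Set.mem_image_of_mem _ h0⟩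
  have hBbdd : BddAbove ((fun d => ∑ k, d k) '' tinRegionU α) := by
    refine ⟨∑ k, α k k, fun y hy => ?_⟩
    obtain ⟨d, hd, rfl⟩ := hy
    exact Finset.sum_le_sum fun k _ => hd.1 k
  have hABsub : ((fun d => ∑ k, d k) '' tinRegion α)
      ⊆ ((fun d => ∑ k, d k) '' tinRegionU α) := Set.image_mono hsub
  refine le_antisymm (csSup_le_csSup hBbdd hAne hABsub) ?_
  refine csSup_le (hAne.mono hABsub) ?_
  rintro y ⟨d, hd, rfl⟩
  have hclip : (fun k => max (d k) 0) ∈ tinRegion α := by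
    refine ⟨fun k => le_max_right _ _, fun k => max_le (hd.1 k) (hpos k k), fun σ hσ => ?_⟩
    exact cycle_clip hK α hpos htin d hd σ.support.card σ hσ le_rfl
  calc ∑ k, d k ≤ ∑ k, max (d k) 0 := Finset.sum_le_sum fun k _ => le_max_left _ _
    _ ≤ sSup ((fun d => ∑ k, d k) '' tinRegion α) :=
        le_csSup (hBbdd.mono hABsub) (Set.mem_image_of_mem _ hclip)
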